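/- Let G be a finite unweighted graph, and order all distinct eigenvalues of the maxcut eigenproblem (M) decreasingly as μ₀ > μ₁ > ⋯ > μ_min = 0. Then for any eigenpair (μ_k, x) of (M) with k = 0, 1, 2, …, the number N(x) of connected components of the subgraph induced on D₀(x) that contain more than one vertex satisfies N(x) ≤ k. In particular, for any eigenvector x of the largest eigenvalue μ₀, the subgraph induced on D₀(x) consists only of isolated vertices. -/

import Mathlib

open Finset

noncomputable section

/-- The set-valued sign function: `{1}` if `t > 0`, `{-1}` if `t < 0`, `[-1,1]` if `t = 0`. -/
def Sgn (t : ℝ) : Set ℝ := if 0 < t then {1} else if t < 0 then {-1} else Set.Icc (-1) 1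

variable {n : ℕ}

/-- The degree `d_i` of vertex `i` (unit edge weights), as a real number. -/
def degR (G : SimpleGraph (Fin n)) [DecidableRel G.Adj] (i : Fin n) : ℝ := (G.degree i : ℝ)

/-- `vol(V) = Σ_i d_i`. -/
def volV (G : SimpleGraph (Fin n)) [DecidableRel G.Adj] : ℝ := ∑ i, degR G i

/-- `(Δ₁ x)`-type row sum `Σ_{j ∼ i} z_{ij}`. -/
def rowSum (G : SimpleGraph (Fin n)) [DecidableRel G.Adj] (z : Fin n → Fin n → ℝ)
    (i : Fin n) : ℝ :=
  ∑ j, if G.Adj i j then z i j else 0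

/-- `D₊(x) = {i : x_i = ‖x‖_∞}` (the norm on `Fin n → ℝ` is the sup norm). -/
def Dplus (x : Fin n → ℝ) : Set (Fin n) := {i | x i = ‖x‖}

/-- `D₋(x) = {i : −x_i = ‖x‖_∞}`. -/
def Dminus (x : Fin n → ℝ) : Set (Fin n) := {i | -x i = ‖x‖}

/-- `D₀(x) = {i : |x_i| < ‖x‖_∞}`. -/
def Dzero (x : Fin n → ℝ) : Set (Fin n) := {i | |x i| < ‖x‖}

-- helpers
lemma Sgn_of_pos {t : ℝ} (h : 0 < t) : Sgn t = {1} := if_pos h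
lemma Sgn_of_neg {t : ℝ} (h : t < 0) : Sgn t = {-1} := by
  unfold Sgn; rw [if_neg (by linarith), if_pos h]
lemma Sgn_zero' : Sgn (0:ℝ) = Set.Icc (-1) 1 := by unfold Sgn; norm_num
lemma Sgn_sub_Icc (t : ℝ) : Sgn t ⊆ Set.Icc (-1) 1 := by
  unfold Sgn
  split_ifs with h1 h2
  · rintro s hs; rw [Set.mem_singleton_iff] at hs; subst hs; constructor <;> norm_num
  · rintro s hs; rw [Set.mem_singleton_iff] at hs; subst hs; constructor <;> norm_num
  · exact fun s hs => hs
lemma eq_one_of_mem_Sgn {s t : ℝ} (h : 0 < t) (hs : s ∈ Sgn t) : s = 1 := by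
  rwa [Sgn_of_pos h, Set.mem_singleton_iff] at hs
lemma eq_negone_of_mem_Sgn {s t : ℝ} (h : t < 0) (hs : s ∈ Sgn t) : s = -1 := by
  rwa [Sgn_of_neg h, Set.mem_singleton_iff] at hs
lemma abs_le_one_of_mem_Sgn {s t : ℝ} (hs : s ∈ Sgn t) : |s| ≤ 1 := by
  have := Sgn_sub_Icc t hs; exact abs_le.mpr this

lemma mem_Dzero {x : Fin n → ℝ} {i : Fin n} : i ∈ Dzero x ↔ |x i| < ‖x‖ := Iff.rfl
lemma mem_Dplus {x : Fin n → ℝ} {i : Fin n} : i ∈ Dplus x ↔ x i = ‖x‖ := Iff.rfl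
lemma mem_Dminus {x : Fin n → ℝ} {i : Fin n} : i ∈ Dminus x ↔ -x i = ‖x‖ := Iff.rfl

lemma abs_le_norm (x : Fin n → ℝ) (i : Fin n) : |x i| ≤ ‖x‖ := by
  simpa [Real.norm_eq_abs] using norm_le_pi_norm x i

lemma vol_nonneg (G : SimpleGraph (Fin n)) [DecidableRel G.Adj] : 0 ≤ volV G :=
  Finset.sum_nonneg fun i _ => Nat.cast_nonneg _

lemma vol_pos (G : SimpleGraph (Fin n)) [DecidableRel G.Adj] {a b : Fin n} (h : G.Adj a b) :
    0 < volV G := by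
  have h1 : 0 < G.degree a := by
    rw [SimpleGraph.degree_pos_iff_exists_adj]; exact ⟨b, h⟩
  have h2 : (0:ℝ) < degR G a := by unfold degR; exact_mod_cast h1
  have h3 : degR G a ≤ volV G :=
    Finset.single_le_sum (f := degR G) (fun i _ => Nat.cast_nonneg _) (Finset.mem_univ a)
  linarith

-- components
def comp (G : SimpleGraph (Fin n)) (P : Set (Fin n)) (v : Fin n) : Set (Fin n) :=
  {u | Relation.ReflTransGen (fun a b => G.Adj a b ∧ a ∈ P ∧ b ∈ P) v u}

lemma mem_comp_self (G : SimpleGraph (Fin n)) (P : Set (Fin n)) (v : Fin n) :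
    v ∈ comp G P v := Relation.ReflTransGen.refl

lemma comp_subset (G : SimpleGraph (Fin n)) {P : Set (Fin n)} {v : Fin n} (hv : v ∈ P) :
    comp G P v ⊆ P := by
  intro u hu
  induction hu with
  | refl => exact hv
  | tail _ h ih => exact h.2.2

lemma comp_symm (G : SimpleGraph (Fin n)) {P : Set (Fin n)} {v u : Fin n}
    (h : u ∈ comp G P v) : v ∈ comp G P u :=
  (@Relation.ReflTransGen.stdSymm _ _ ⟨fun a b hab => ⟨hab.1.symm, hab.2.2, hab.2.1⟩⟩).symm _ _ h

lemma comp_eq_of_mem (G : SimpleGraph (Fin n)) {P : Set (Fin n)} {v u : Fin n}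
    (h : u ∈ comp G P v) : comp G P v = comp G P u := by
  ext w
  constructor
  · intro hw; exact Relation.ReflTransGen.trans (comp_symm G h) hw
  · intro hw; exact Relation.ReflTransGen.trans h hw

lemma comp_shrink (G : SimpleGraph (Fin n)) {P : Set (Fin n)} {v w : Fin n}
    (hv : v ∈ P) (hne : comp G P v ≠ comp G P w) :
    comp G (P \ comp G P w) v = comp G P v ∧ v ∉ comp G P w := by
  have hdisj : ∀ u, u ∈ comp G P v → u ∉ comp G P w := by
    intro u h1 h2
    exact hne ((comp_eq_of_mem G h1).trans (comp_eq_of_mem G h2).symm)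
  refine ⟨?_, hdisj v (mem_comp_self G P v)⟩
  apply Set.eq_of_subset_of_subset
  · intro u hu
    exact Relation.ReflTransGen.mono (p := fun a b => G.Adj a b ∧ a ∈ P ∧ b ∈ P)
      (by intro a b hab; exact ⟨hab.1, hab.2.1.1, hab.2.2.1⟩) _ _ hu
  · intro u hu
    induction hu with
    | refl => exact Relation.ReflTransGen.refl
    | @tail c u' hvc hcu ih =>
      exact ih.tail ⟨hcu.1, ⟨hcu.2.1, hdisj c hvc⟩, ⟨hcu.2.2, hdisj u' (hvc.tail hcu)⟩⟩

/-- `(μ, x)` with `x ≠ 0` is an eigenpair of the maxcut eigenproblem (M):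
`0 ∈ Δ₁x − μ·vol(V)·∂‖x‖_∞`. -/
def IsEigenM (G : SimpleGraph (Fin n)) [DecidableRel G.Adj]
    (mu : ℝ) (x : Fin n → ℝ) : Prop :=
  x ≠ 0 ∧ ∃ z : Fin n → Fin n → ℝ,
    (∀ i j, G.Adj i j → z i j ∈ Sgn (x i - x j)) ∧
    (∀ i j, z i j = - z j i) ∧
    (∀ i, i ∈ Dzero x → rowSum G z i = 0) ∧
    (∀ i, i ∈ Dplus x ∪ Dminus x →
      ∃ p ∈ Set.Icc (0 : ℝ) 1, rowSum G z i = mu * volV G * Real.sign (x i) * p) ∧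
    (∑ i, |rowSum G z i|) = mu * volV G

lemma sign_int (t : ℝ) : ∃ a : ℤ, Real.sign t = (a : ℝ) := by
  rcases lt_trichotomy t 0 with h | h | h
  · exact ⟨-1, by rw [Real.sign_of_neg h]; norm_num⟩
  · exact ⟨0, by rw [h, Real.sign_zero]; norm_num⟩
  · exact ⟨1, by rw [Real.sign_of_pos h]; norm_num⟩

lemma eigen_int (G : SimpleGraph (Fin n)) [DecidableRel G.Adj] {mu : ℝ} {x : Fin n → ℝ}
    (h : IsEigenM G mu x) :
    ∃ m : ℕ, mu * volV G * 2 = (m : ℝ) ∧ m ≤ 2 * ∑ i, G.degree i := by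
  classical
  obtain ⟨hx0, z, hz1, hz2, hz3, hz4, hz5⟩ := h
  have hM : 0 < ‖x‖ := norm_pos_iff.mpr hx0
  have hnn : 0 ≤ mu * volV G := by
    rw [← hz5]; exact Finset.sum_nonneg fun i _ => abs_nonneg _
  set s : Fin n → ℝ := fun i => Real.sign (x i) with hsdef
  -- |rowSum| = s i * rowSum
  have habs : ∀ i, |rowSum G z i| = s i * rowSum G z i := by
    intro i
    by_cases hi : |x i| < ‖x‖
    · rw [hz3 i hi]; simp
    · have he : |x i| = ‖x‖ := le_antisymm (abs_le_norm x i) (not_lt.mp hi)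
      rcases (abs_eq (norm_nonneg x)).mp he with he1 | he1
      · obtain ⟨p, hp, hrs⟩ := hz4 i (Or.inl he1)
        have hsx : Real.sign (x i) = 1 := by rw [he1]; exact Real.sign_of_pos hM
        have hsi : s i = 1 := hsx
        have h0 : 0 ≤ mu * volV G * Real.sign (x i) * p := by
          rw [hsx]; nlinarith [hp.1]
        rw [hrs, hsi, abs_of_nonneg h0]; ring
      · obtain ⟨p, hp, hrs⟩ := hz4 i (Or.inr (by rw [mem_Dminus, he1]; ring))
        have hsx : Real.sign (x i) = -1 := by
          apply Real.sign_of_neg; rw [he1]; linarith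
        have hsi : s i = -1 := hsx
        have h0 : mu * volV G * Real.sign (x i) * p ≤ 0 := by
          rw [hsx]; nlinarith [hp.1]
        rw [hrs, hsi, abs_of_nonpos h0]; ring

  -- double sum form
  have hsum1 : ∀ i, s i * rowSum G z i = ∑ j, (if G.Adj i j then s i * z i j else 0) := by
    intro i; unfold rowSum; rw [Finset.mul_sum]
    exact Finset.sum_congr rfl fun j _ => by by_cases hij : G.Adj i j <;> simp [hij]
  have hswap : ∑ i, s i * rowSum G z i
      = ∑ i, ∑ j, (if G.Adj i j then -(s j * z i j) else 0) := by
    calc ∑ i, s i * rowSum G z i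
        = ∑ i, ∑ j, (if G.Adj i j then s i * z i j else 0) :=
          Finset.sum_congr rfl (fun i _ => hsum1 i)
      _ = ∑ j, ∑ i, (if G.Adj i j then s i * z i j else 0) := Finset.sum_comm
      _ = ∑ i, ∑ j, (if G.Adj i j then -(s j * z i j) else 0) := by
          refine Finset.sum_congr rfl fun i _ => Finset.sum_congr rfl fun j _ => ?_
          by_cases hij : G.Adj i j
          · rw [if_pos hij.symm, if_pos hij, hz2 j i]; ring
          · rw [if_neg (fun hh => hij hh.symm), if_neg hij]
  have htot : 2 * (mu * volV G)
      = ∑ i, ∑ j, (if G.Adj i j then (s i - s j) * z i j else 0) := by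
    have e1 : ∑ i, |rowSum G z i| = ∑ i, s i * rowSum G z i :=
      Finset.sum_congr rfl fun i _ => habs i
    calc 2 * (mu * volV G)
        = (∑ i, s i * rowSum G z i) + (∑ i, s i * rowSum G z i) := by
          rw [← e1, hz5]; ring
      _ = (∑ i, ∑ j, if G.Adj i j then s i * z i j else 0)
          + (∑ i, ∑ j, if G.Adj i j then -(s j * z i j) else 0) := by
          congr 1
          · exact Finset.sum_congr rfl fun i _ => hsum1 i
      _ = ∑ i, ∑ j, (if G.Adj i j then (s i - s j) * z i j else 0) := by
          rw [← Finset.sum_add_distrib]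
          refine Finset.sum_congr rfl fun i _ => ?_
          rw [← Finset.sum_add_distrib]
          refine Finset.sum_congr rfl fun j _ => ?_
          by_cases hij : G.Adj i j <;> simp only [if_pos, if_neg, hij, if_true, if_false] <;> ring
  have hint : ∀ i j, ∃ q : ℤ, (if G.Adj i j then (s i - s j) * z i j else 0) = (q : ℝ) := by
    intro i j
    by_cases hij : G.Adj i j
    · by_cases hxe : x i = x j
      · refine ⟨0, ?_⟩
        rw [if_pos hij]
        have hss : s i = s j := by rw [hsdef]; simp only []; rw [hxe]
        rw [hss]; push_cast; ring
      · obtain ⟨ai, hai⟩ := sign_int (x i)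
        obtain ⟨aj, haj⟩ := sign_int (x j)
        rcases lt_or_gt_of_ne (sub_ne_zero.mpr hxe) with hlt | hgt
        · refine ⟨(ai - aj) * (-1), ?_⟩
          rw [if_pos hij, eq_negone_of_mem_Sgn hlt (hz1 i j hij)]
          have e1 : s i = (ai : ℝ) := hai
          have e2 : s j = (aj : ℝ) := haj
          rw [e1, e2]; push_cast; ring
        · refine ⟨(ai - aj) * 1, ?_⟩
          rw [if_pos hij, eq_one_of_mem_Sgn hgt (hz1 i j hij)]
          have e1 : s i = (ai : ℝ) := hai
          have e2 : s j = (aj : ℝ) := haj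
          rw [e1, e2]; push_cast; ring
    · exact ⟨0, by rw [if_neg hij]; norm_num⟩
  choose F hF using hint
  have hcast : (∑ i, ∑ j, (if G.Adj i j then (s i - s j) * z i j else 0))
      = ((∑ i, ∑ j, F i j : ℤ) : ℝ) := by
    push_cast
    exact Finset.sum_congr rfl fun i _ => Finset.sum_congr rfl fun j _ => hF i j
  set q : ℤ := ∑ i, ∑ j, F i j with hqdef
  have hq : mu * volV G * 2 = (q : ℝ) := by rw [← hcast, ← htot]; ring
  have hqnn : 0 ≤ q := by
    have : (0:ℝ) ≤ (q:ℝ) := by rw [← hq]; linarith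
    exact_mod_cast this
  -- upper bound
  have hb1 : ∀ i, |rowSum G z i| ≤ degR G i := by
    intro i
    unfold rowSum degR
    calc |∑ j, if G.Adj i j then z i j else 0|
        ≤ ∑ j, |if G.Adj i j then z i j else 0| := Finset.abs_sum_le_sum_abs _ _
      _ ≤ ∑ j, (if G.Adj i j then (1:ℝ) else 0) := by
          refine Finset.sum_le_sum fun j _ => ?_
          by_cases hij : G.Adj i j
          · rw [if_pos hij, if_pos hij]; exact abs_le_one_of_mem_Sgn (hz1 i j hij)
          · rw [if_neg hij, if_neg hij]; norm_num
      _ = ((Finset.univ.filter (fun j => G.Adj i j)).card : ℝ) := by rw [Finset.sum_boole]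
      _ = (G.degree i : ℝ) := by rw [← SimpleGraph.neighborFinset_eq_filter]; rfl
  have hb2 : mu * volV G ≤ volV G := by
    rw [← hz5]; unfold volV; exact Finset.sum_le_sum fun i _ => hb1 i
  have hvolcast : volV G = ((∑ i, G.degree i : ℕ) : ℝ) := by
    unfold volV degR; push_cast; rfl
  have hqle : q ≤ 2 * (∑ i, G.degree i : ℕ) := by
    have : (q : ℝ) ≤ 2 * ((∑ i, G.degree i : ℕ) : ℝ) := by
      rw [← hq, ← hvolcast]; linarith
    exact_mod_cast this
  refine ⟨q.toNat, ?_, ?_⟩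
  · rw [hq]; exact_mod_cast (Int.toNat_of_nonneg hqnn).symm
  · have := Int.toNat_le.mpr hqle
    exact_mod_cast this

lemma spec_finite (G : SimpleGraph (Fin n)) [DecidableRel G.Adj] (hvol : 0 < volV G) :
    {nu : ℝ | ∃ y : Fin n → ℝ, IsEigenM G nu y}.Finite := by
  apply Set.Finite.subset
    ((Set.finite_Iic (2 * ∑ i, G.degree i)).image (fun m : ℕ => (m : ℝ) / (volV G * 2)))
  rintro nu ⟨y, hy⟩
  obtain ⟨m, hm1, hm2⟩ := eigen_int G hy
  refine ⟨m, hm2, ?_⟩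
  rw [div_eq_iff (by positivity)]
  linarith [hm1]

set_option maxHeartbeats 2000000 in
lemma lemA (G : SimpleGraph (Fin n)) [DecidableRel G.Adj] {mu : ℝ} {x : Fin n → ℝ}
    (h : IsEigenM G mu x) {a b : Fin n} (hab : G.Adj a b)
    (ha : a ∈ Dzero x) (hb : b ∈ Dzero x) :
    ∃ nu y, IsEigenM G nu y ∧ mu < nu ∧ Dzero y = Dzero x \ comp G (Dzero x) a := by
  classical
  obtain ⟨hx0, z, hz1, hz2, hz3, hz4, hz5⟩ := h
  have hM : 0 < ‖x‖ := norm_pos_iff.mpr hx0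
  have hvol : 0 < volV G := vol_pos G hab
  have hzabs : ∀ i j, G.Adj i j → |z i j| ≤ 1 := fun i j hij =>
    abs_le_one_of_mem_Sgn (hz1 i j hij)
  set P : Set (Fin n) := Dzero x with hPdef
  set D : Set (Fin n) := comp G P a with hDdef
  have haD : a ∈ D := mem_comp_self G P a
  have hbD : b ∈ D := Relation.ReflTransGen.single ⟨hab, ha, hb⟩
  have hDP : D ⊆ P := comp_subset G ha
  have hclosed : ∀ i ∈ D, ∀ j, G.Adj i j → j ∈ P → j ∈ D := by
    intro i hi j hij hjP
    exact Relation.ReflTransGen.tail hi ⟨hij, hDP hi, hjP⟩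
  have hout : ∀ i ∈ D, ∀ j, G.Adj i j → j ∉ D → |x j| = ‖x‖ := by
    intro i hi j hij hjD
    refine le_antisymm (abs_le_norm x j) (not_lt.mp fun hj => hjD ?_)
    exact hclosed i hi j hij hj
  -- sign pattern
  set ea : ℝ := if 0 ≤ z a b then -1 else 1 with headef
  set ε : Fin n → ℝ := fun i => if i = a then ea else if i = b then -ea else 1 with hεdef
  have hane : a ≠ b := G.ne_of_adj hab
  have hεa : ε a = ea := by simp [hεdef]
  have hεb : ε b = -ea := by simp [hεdef, hane.symm]
  have hea2 : ea = 1 ∨ ea = -1 := by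
    rw [headef]; split_ifs <;> simp
  have hε1 : ∀ i, ε i = 1 ∨ ε i = -1 := by
    intro i; simp only [hεdef]
    split_ifs with h1 h2
    · exact hea2
    · rcases hea2 with h | h <;> rw [h] <;> norm_num
    · left; rfl
  have hεsq : ∀ i, ε i * ε i = 1 := by
    intro i; rcases hε1 i with h | h <;> rw [h] <;> norm_num
  have hεabs : ∀ i, |ε i| = 1 := by
    intro i; rcases hε1 i with h | h <;> rw [h] <;> norm_num
  have hεne0 : ∀ i, ε i ≠ 0 := by
    intro i; rcases hε1 i with h | h <;> rw [h] <;> norm_num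
  have hflip : ∀ i j, ε i ≠ ε j → ε j = -ε i := by
    intro i j hij
    rcases hε1 i with h1 | h1 <;> rcases hε1 j with h2 | h2 <;>
      rw [h1, h2] at hij ⊢ <;> first | exact absurd rfl hij | norm_num
  have hεab : ε a ≠ ε b := by
    rw [hεa, hεb]; rcases hea2 with h | h <;> rw [h] <;> norm_num
  have hkey : ε a * z a b < 1 := by
    rw [hεa, headef]
    split_ifs with h0
    · nlinarith
    · push_neg at h0; nlinarith
  -- new vector and subgradient field
  set y : Fin n → ℝ := fun i => if i ∈ D then ε i * ‖x‖ else x i with hydef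
  have hyD : ∀ i ∈ D, y i = ε i * ‖x‖ := fun i hi => by simp [hydef, hi]
  have hyN : ∀ i, i ∉ D → y i = x i := fun i hi => by simp [hydef, hi]
  have hyabs : ∀ i ∈ D, |y i| = ‖x‖ := by
    intro i hi
    rw [hyD i hi, abs_mul, hεabs i, one_mul, abs_of_pos hM]
  have hynorm : ‖y‖ = ‖x‖ := by
    apply le_antisymm
    · apply (pi_norm_le_iff_of_nonneg hM.le).mpr
      intro i
      rw [Real.norm_eq_abs]
      by_cases hi : i ∈ D
      · rw [hyabs i hi]
      · rw [hyN i hi]; exact abs_le_norm x i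
    · calc ‖x‖ = |y a| := (hyabs a haD).symm
        _ ≤ ‖y‖ := abs_le_norm y a
  set w : Fin n → Fin n → ℝ := fun i j => if i ∈ D ∧ j ∈ D ∧ ε i ≠ ε j then ε i else z i j
    with hwdef
  have hwD : ∀ i j, i ∈ D → j ∈ D → ε i ≠ ε j → w i j = ε i := by
    intro i j h1 h2 h3; simp only [hwdef]; rw [if_pos ⟨h1, h2, h3⟩]
  have hwN : ∀ i j, ¬(i ∈ D ∧ j ∈ D ∧ ε i ≠ ε j) → w i j = z i j := by
    intro i j h1; simp only [hwdef]; rw [if_neg h1]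
  -- antisymmetry
  have hw2 : ∀ i j, w i j = - w j i := by
    intro i j
    by_cases hc : i ∈ D ∧ j ∈ D ∧ ε i ≠ ε j
    · rw [hwD i j hc.1 hc.2.1 hc.2.2, hwD j i hc.2.1 hc.1 (Ne.symm hc.2.2),
        hflip i j hc.2.2]
      ring
    · have hc' : ¬(j ∈ D ∧ i ∈ D ∧ ε j ≠ ε i) := fun hh => hc ⟨hh.2.1, hh.1, Ne.symm hh.2.2⟩
      rw [hwN i j hc, hwN j i hc']
      exact hz2 i j
  -- subgradient membership
  have hw1 : ∀ i j, G.Adj i j → w i j ∈ Sgn (y i - y j) := by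
    intro i j hij
    by_cases hiD : i ∈ D <;> by_cases hjD : j ∈ D
    · by_cases hee : ε i = ε j
      · have hwv : w i j = z i j := hwN i j (by tauto)
        have hval : y i - y j = 0 := by rw [hyD i hiD, hyD j hjD, hee]; ring
        rw [hwv, hval, Sgn_zero']
        exact Sgn_sub_Icc _ (hz1 i j hij)
      · have hwv : w i j = ε i := hwD i j hiD hjD hee
        have hval : y i - y j = 2 * (ε i * ‖x‖) := by
          rw [hyD i hiD, hyD j hjD, hflip i j hee]; ring
        rw [hwv, hval]
        rcases hε1 i with h1 | h1 <;> rw [h1]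
        · rw [Sgn_of_pos (by nlinarith)]; simp
        · rw [Sgn_of_neg (by nlinarith)]; simp
    · have hwv : w i j = z i j := hwN i j (by tauto)
      have hyj : y j = x j := hyN j hjD
      have hxi : |x i| < ‖x‖ := hDP hiD
      rcases (abs_eq (norm_nonneg x)).mp (hout i hiD j hij hjD) with he1 | he1
      · rcases hε1 i with h1 | h1
        · have hval : y i - y j = 0 := by rw [hyD i hiD, hyj, he1, h1]; ring
          rw [hwv, hval, Sgn_zero']; exact Sgn_sub_Icc _ (hz1 i j hij)
        · have hz' : z i j = -1 :=
            eq_negone_of_mem_Sgn (by rw [he1]; cases abs_lt.mp hxi; linarith) (hz1 i j hij)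
          have hval : y i - y j = -2 * ‖x‖ := by rw [hyD i hiD, hyj, he1, h1]; ring
          rw [hwv, hval, hz', Sgn_of_neg (by nlinarith)]; simp
      · rcases hε1 i with h1 | h1
        · have hz' : z i j = 1 :=
            eq_one_of_mem_Sgn (by rw [he1]; cases abs_lt.mp hxi; linarith) (hz1 i j hij)
          have hval : y i - y j = 2 * ‖x‖ := by rw [hyD i hiD, hyj, he1, h1]; ring
          rw [hwv, hval, hz', Sgn_of_pos (by nlinarith)]; simp
        · have hval : y i - y j = 0 := by rw [hyD i hiD, hyj, he1, h1]; ring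
          rw [hwv, hval, Sgn_zero']; exact Sgn_sub_Icc _ (hz1 i j hij)
    · -- i ∉ D, j ∈ D
      have hwv : w i j = z i j := hwN i j (by tauto)
      have hyi : y i = x i := hyN i hiD
      have hxj : |x j| < ‖x‖ := hDP hjD
      rcases (abs_eq (norm_nonneg x)).mp (hout j hjD i hij.symm hiD) with he1 | he1
      · rcases hε1 j with h1 | h1
        · have hval : y i - y j = 0 := by rw [hyD j hjD, hyi, he1, h1]; ring
          rw [hwv, hval, Sgn_zero']; exact Sgn_sub_Icc _ (hz1 i j hij)
        · have hz' : z i j = 1 :=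
            eq_one_of_mem_Sgn (by rw [he1]; cases abs_lt.mp hxj; linarith) (hz1 i j hij)
          have hval : y i - y j = 2 * ‖x‖ := by rw [hyD j hjD, hyi, he1, h1]; ring
          rw [hwv, hval, hz', Sgn_of_pos (by nlinarith)]; simp
      · rcases hε1 j with h1 | h1
        · have hz' : z i j = -1 :=
            eq_negone_of_mem_Sgn (by rw [he1]; cases abs_lt.mp hxj; linarith) (hz1 i j hij)
          have hval : y i - y j = -2 * ‖x‖ := by rw [hyD j hjD, hyi, he1, h1]; ring
          rw [hwv, hval, hz', Sgn_of_neg (by nlinarith)]; simp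
        · have hval : y i - y j = 0 := by rw [hyD j hjD, hyi, he1, h1]; ring
          rw [hwv, hval, Sgn_zero']; exact Sgn_sub_Icc _ (hz1 i j hij)
    · have hwv : w i j = z i j := hwN i j (by tauto)
      rw [hwv, hyN i hiD, hyN j hjD]
      exact hz1 i j hij
  -- rowSum facts
  have hrow_off : ∀ i, i ∉ D → rowSum G w i = rowSum G z i := by
    intro i hiD
    unfold rowSum
    refine Finset.sum_congr rfl fun j _ => ?_
    by_cases hij : G.Adj i j
    · rw [if_pos hij, if_pos hij, hwN i j (by tauto)]
    · rw [if_neg hij, if_neg hij]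
  have hcut : ∀ i ∈ D, ε i * rowSum G w i
      = ∑ j, (if G.Adj i j ∧ j ∈ D ∧ ε i ≠ ε j then 1 - ε i * z i j else 0) := by
    intro i hiD
    have h0 : rowSum G z i = 0 := hz3 i (hDP hiD)
    have e0 : ε i * rowSum G w i = ε i * (rowSum G w i - rowSum G z i) := by rw [h0]; ring
    rw [e0]
    unfold rowSum
    rw [← Finset.sum_sub_distrib, Finset.mul_sum]
    refine Finset.sum_congr rfl fun j _ => ?_
    by_cases hij : G.Adj i j
    · rw [if_pos hij, if_pos hij]
      by_cases hc : j ∈ D ∧ ε i ≠ ε j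
      · rw [if_pos ⟨hij, hc.1, hc.2⟩, hwD i j hiD hc.1 hc.2]
        linear_combination hεsq i
      · rw [if_neg (by tauto), hwN i j (by tauto)]; ring
    · rw [if_neg hij, if_neg hij, if_neg (by tauto)]; ring
  have hterm_nonneg : ∀ i j,
      0 ≤ (if G.Adj i j ∧ j ∈ D ∧ ε i ≠ ε j then 1 - ε i * z i j else 0) := by
    intro i j
    split_ifs with hc
    · have h2 : ε i * z i j ≤ 1 := by
        calc ε i * z i j ≤ |ε i * z i j| := le_abs_self _
          _ = |z i j| := by rw [abs_mul, hεabs i, one_mul]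
          _ ≤ 1 := hzabs i j hc.1
      linarith
    · exact le_refl _
  have hr_nonneg : ∀ i ∈ D, 0 ≤ ε i * rowSum G w i := by
    intro i hi
    rw [hcut i hi]
    exact Finset.sum_nonneg fun j _ => hterm_nonneg i j
  have hra : 1 - ε a * z a b ≤ ε a * rowSum G w a := by
    rw [hcut a haD]
    have h1 : (if G.Adj a b ∧ b ∈ D ∧ ε a ≠ ε b then 1 - ε a * z a b else 0)
        = 1 - ε a * z a b := if_pos ⟨hab, hbD, hεab⟩
    calc 1 - ε a * z a b = _ := h1.symm
      _ ≤ _ := Finset.single_le_sum (fun j _ => hterm_nonneg a j) (Finset.mem_univ b)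
  have hrapos : 0 < ε a * rowSum G w a := lt_of_lt_of_le (by linarith) hra
  have habsD : ∀ i ∈ D, |rowSum G w i| = ε i * rowSum G w i := by
    intro i hi
    have e1 : |ε i * rowSum G w i| = |rowSum G w i| := by
      rw [abs_mul, hεabs i, one_mul]
    rw [← e1, abs_of_nonneg (hr_nonneg i hi)]
  -- sum splitting
  have e1 : ∑ i ∈ Finset.univ.filter (fun i => i ∈ D), |rowSum G z i| = 0 :=
    Finset.sum_eq_zero fun i hi => by
      rw [hz3 i (hDP (Finset.mem_filter.mp hi).2), abs_zero]
  have e2 : ∑ i ∈ Finset.univ.filter (fun i => ¬ i ∈ D), |rowSum G w i|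
      = ∑ i ∈ Finset.univ.filter (fun i => ¬ i ∈ D), |rowSum G z i| :=
    Finset.sum_congr rfl fun i hi => by rw [hrow_off i (Finset.mem_filter.mp hi).2]
  have e3 := Finset.sum_filter_add_sum_filter_not Finset.univ (fun i => i ∈ D)
    (fun i => |rowSum G z i|)
  have e4 := Finset.sum_filter_add_sum_filter_not Finset.univ (fun i => i ∈ D)
    (fun i => |rowSum G w i|)
  have e5 : ∑ i ∈ Finset.univ.filter (fun i => i ∈ D), |rowSum G w i|
      = ∑ i ∈ Finset.univ.filter (fun i => i ∈ D), ε i * rowSum G w i :=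
    Finset.sum_congr rfl fun i hi => habsD i (Finset.mem_filter.mp hi).2
  set RD : ℝ := ∑ i ∈ Finset.univ.filter (fun i => i ∈ D), ε i * rowSum G w i with hRD
  have hsplit : ∑ i, |rowSum G w i| = mu * volV G + RD := by
    rw [← hz5] at *
    linarith [e1, e2, e3, e4, e5]
  have hRDpos : 0 < RD := by
    have : ε a * rowSum G w a ≤ RD := by
      apply Finset.single_le_sum (fun i hi => hr_nonneg i (Finset.mem_filter.mp hi).2)
      exact Finset.mem_filter.mpr ⟨Finset.mem_univ a, haD⟩
    linarith
  have hnnμ : 0 ≤ mu * volV G := by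
    rw [← hz5]; exact Finset.sum_nonneg fun i _ => abs_nonneg _
  have hmu0 : 0 ≤ mu := by nlinarith
  set nu : ℝ := (∑ i, |rowSum G w i|) / volV G with hnu
  have hnuvol : nu * volV G = ∑ i, |rowSum G w i| := by
    rw [hnu]; field_simp
  have hμν : mu * volV G < nu * volV G := by rw [hnuvol, hsplit]; linarith
  have hmunu : mu < nu := lt_of_mul_lt_mul_right hμν hvol.le
  have hnuvolpos : 0 < nu * volV G := lt_of_le_of_lt hnnμ hμν
  -- Dzero y
  have hDzy : Dzero y = P \ D := by
    ext i
    rw [mem_Dzero, hynorm, Set.mem_diff]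
    constructor
    · intro hi
      have hiD : i ∉ D := fun hh => by rw [hyabs i hh] at hi; exact lt_irrefl _ hi
      rw [hyN i hiD] at hi
      exact ⟨hi, hiD⟩
    · rintro ⟨hi, hiD⟩
      rw [hyN i hiD]
      exact hi
  refine ⟨nu, y, ⟨?_, w, hw1, hw2, ?_, ?_, hnuvol.symm⟩, hmunu, hDzy⟩
  · -- y ≠ 0
    intro hy0
    have : y a = 0 := by rw [hy0]; rfl
    rw [hyD a haD] at this
    rcases mul_eq_zero.mp this with hh | hh
    · exact hεne0 a hh
    · exact hM.ne' hh
  · -- rowSum zero on Dzero y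
    intro i hi
    rw [hDzy] at hi
    rw [hrow_off i hi.2]
    exact hz3 i hi.1
  · -- the D± condition
    intro i hi
    by_cases hiD : i ∈ D
    · have hsgn : Real.sign (y i) = ε i := by
        rw [hyD i hiD]
        rcases hε1 i with h1 | h1 <;> rw [h1]
        · rw [one_mul]; exact Real.sign_of_pos hM
        · have : (-1 : ℝ) * ‖x‖ < 0 := by nlinarith
          rw [Real.sign_of_neg this]
      refine ⟨(ε i * rowSum G w i) / (nu * volV G),
        ⟨div_nonneg (hr_nonneg i hiD) hnuvolpos.le, ?_⟩, ?_⟩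
      · rw [div_le_one hnuvolpos, hnuvol]
        calc ε i * rowSum G w i = |rowSum G w i| := (habsD i hiD).symm
          _ ≤ ∑ j, |rowSum G w j| :=
            Finset.single_le_sum (f := fun j => |rowSum G w j|)
              (fun j _ => abs_nonneg _) (Finset.mem_univ i)
      · rw [hsgn]
        have hne : nu * volV G ≠ 0 := hnuvolpos.ne'
        rw [show nu * volV G * ε i * (ε i * rowSum G w i / (nu * volV G))
            = (ε i * ε i) * rowSum G w i * ((nu * volV G) / (nu * volV G)) by ring,
          hεsq i, div_self hne]
        ring
    · have hyx : y i = x i := hyN i hiD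
      have hiPM : i ∈ Dplus x ∪ Dminus x := by
        rcases hi with hi | hi
        · left
          rw [mem_Dplus]
          rw [mem_Dplus, hynorm, hyx] at hi
          exact hi
        · right
          rw [mem_Dminus]
          rw [mem_Dminus, hynorm, hyx] at hi
          exact hi
      obtain ⟨p, hp, hrs⟩ := hz4 i hiPM
      refine ⟨mu * volV G * p / (nu * volV G),
        ⟨div_nonneg (mul_nonneg hnnμ hp.1) hnuvolpos.le, ?_⟩, ?_⟩
      · rw [div_le_one hnuvolpos]
        nlinarith [hp.1, hp.2]
      · rw [hrow_off i hiD, hrs, hyx]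
        field_simp
        rw [mul_div_cancel_right₀ _
          (show nu ≠ 0 from fun h => by rw [h, zero_mul] at hnuvolpos; exact lt_irrefl _ hnuvolpos)]

/-- `D` is the vertex set of a connected component of the subgraph of `G` induced by `P`. -/
def IsCompIn (G : SimpleGraph (Fin n)) (P : Set (Fin n)) (D : Set (Fin n)) : Prop :=
  ∃ v ∈ P, D = {u | Relation.ReflTransGen (fun a b => G.Adj a b ∧ a ∈ P ∧ b ∈ P) v u}

lemma isCompIn_iff (G : SimpleGraph (Fin n)) (P D : Set (Fin n)) :
    IsCompIn G P D ↔ ∃ v ∈ P, D = comp G P v := Iff.rfl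

lemma count_le (G : SimpleGraph (Fin n)) [DecidableRel G.Adj] :
    ∀ m : ℕ, ∀ mu : ℝ, ∀ x : Fin n → ℝ, IsEigenM G mu x →
      m ≤ {D : Set (Fin n) | IsCompIn G (Dzero x) D ∧ 1 < D.ncard}.ncard →
      m ≤ {nu : ℝ | (∃ y, IsEigenM G nu y) ∧ mu < nu}.ncard := by
  intro m
  induction m with
  | zero => exact fun _ _ _ _ => Nat.zero_le _
  | succ m ih =>
    intro mu x hx hcard
    have hSne : {D : Set (Fin n) | IsCompIn G (Dzero x) D ∧ 1 < D.ncard}.Nonempty :=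
      Set.nonempty_of_ncard_ne_zero (by omega)
    obtain ⟨D, hDc, hD2⟩ := hSne
    obtain ⟨v, hv, hDeq⟩ := (isCompIn_iff G _ D).mp hDc
    obtain ⟨u, hu, hune⟩ := Set.exists_ne_of_one_lt_ncard hD2 v
    rw [hDeq] at hu
    rcases Relation.ReflTransGen.cases_head hu with heq | ⟨c, hvc, _⟩
    · exact absurd heq.symm hune
    obtain ⟨hadj, hvP, hcP⟩ := hvc
    obtain ⟨nu, y, hey, hμν, hDzy⟩ := lemA G hx hadj hvP hcP
    -- transfer the remaining components
    have hDD : D = comp G (Dzero x) v := hDeq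
    have htrans : {E : Set (Fin n) | IsCompIn G (Dzero x) E ∧ 1 < E.ncard} \ {D}
        ⊆ {E : Set (Fin n) | IsCompIn G (Dzero y) E ∧ 1 < E.ncard} := by
      rintro E ⟨⟨hEc, hE2⟩, hEne⟩
      obtain ⟨v', hv', hEeq⟩ := (isCompIn_iff G _ E).mp hEc
      have hne : comp G (Dzero x) v' ≠ comp G (Dzero x) v := by
        rw [← hEeq, ← hDD]
        simpa using hEne
      obtain ⟨hsh1, hsh2⟩ := comp_shrink G hv' hne
      refine ⟨(isCompIn_iff G _ E).mpr ⟨v', ?_, ?_⟩, hE2⟩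
      · rw [hDzy]; exact ⟨hv', hsh2⟩
      · rw [hEeq, hDzy]; exact hsh1.symm
    have hDmem : D ∈ {E : Set (Fin n) | IsCompIn G (Dzero x) E ∧ 1 < E.ncard} := ⟨hDc, hD2⟩
    have h1 : m ≤ ({E : Set (Fin n) | IsCompIn G (Dzero x) E ∧ 1 < E.ncard} \ {D}).ncard := by
      rw [Set.ncard_diff_singleton_of_mem hDmem]
      omega
    have h2 : m ≤ {E : Set (Fin n) | IsCompIn G (Dzero y) E ∧ 1 < E.ncard}.ncard :=
      le_trans h1 (Set.ncard_le_ncard htrans (Set.toFinite _))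
    have h3 := ih nu y hey h2
    -- one more eigenvalue
    have hvol : 0 < volV G := vol_pos G hadj
    have hfinall := spec_finite G hvol
    have hfinmu : {ν : ℝ | (∃ y, IsEigenM G ν y) ∧ mu < ν}.Finite :=
      hfinall.subset fun t ht => ht.1
    have hfinnu : {ν : ℝ | (∃ y, IsEigenM G ν y) ∧ nu < ν}.Finite :=
      hfinall.subset fun t ht => ht.1
    have hsub : insert nu {ν : ℝ | (∃ y, IsEigenM G ν y) ∧ nu < ν}
        ⊆ {ν : ℝ | (∃ y, IsEigenM G ν y) ∧ mu < ν} := by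
      rintro t (rfl | ht)
      · exact ⟨⟨y, hey⟩, hμν⟩
      · exact ⟨ht.1, lt_trans hμν ht.2⟩
    have hins : (insert nu {ν : ℝ | (∃ y, IsEigenM G ν y) ∧ nu < ν}).ncard
        = {ν : ℝ | (∃ y, IsEigenM G ν y) ∧ nu < ν}.ncard + 1 :=
      Set.ncard_insert_of_notMem (fun hmem => lt_irrefl nu hmem.2) hfinnu
    have := Set.ncard_le_ncard hsub hfinmu
    omega


theorem stmt16 (G : SimpleGraph (Fin n)) [DecidableRel G.Adj]
    (mu : ℝ) (x : Fin n → ℝ) (k : ℕ)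
    (hx : IsEigenM G mu x)
    -- `μ` is the (k+1)-th largest eigenvalue: exactly `k` eigenvalues of (M) exceed `μ`
    (hk : {nu : ℝ | (∃ y, IsEigenM G nu y) ∧ mu < nu}.ncard = k) :
    {D : Set (Fin n) | IsCompIn G (Dzero x) D ∧ 1 < D.ncard}.ncard ≤ k ∧
    (k = 0 → ∀ i j, G.Adj i j → i ∈ Dzero x → j ∈ Dzero x → False) := by
  constructor
  · have := count_le G ({D : Set (Fin n) | IsCompIn G (Dzero x) D ∧ 1 < D.ncard}.ncard)
      mu x hx (le_refl _)
    omega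
  · intro hk0 i j hadj hi hj
    obtain ⟨nu, y, hey, hμν, _⟩ := lemA G hx hadj hi hj
    have hvol : 0 < volV G := vol_pos G hadj
    have hfin : {ν : ℝ | (∃ y, IsEigenM G ν y) ∧ mu < ν}.Finite :=
      (spec_finite G hvol).subset fun t ht => ht.1
    have hmem : nu ∈ {ν : ℝ | (∃ y, IsEigenM G ν y) ∧ mu < ν} := ⟨⟨y, hey⟩, hμν⟩
    have : {ν : ℝ | (∃ y, IsEigenM G ν y) ∧ mu < ν} = ∅ := by
      rw [← Set.ncard_eq_zero hfin]; omega
    rw [this] at hmem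
    exact hmem
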